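/- Let n ≥ 3 and ℓ ≥ 0 be integers. Then the number of tuples m ∈ X_{A^{(2)}}(n,ℓ) with m_{2j} = m_{2j+1} for every j ≥ 0 with 2j+1 ≤ n equals ∑_{m ∈ X_{A^{(2)}}(n,ℓ)} (−1)^{m_1 + m_3 + m_5 + ⋯}, where the exponent is the sum of the entries m_i with i odd. (This is the cyclic sieving phenomenon of type A_{2n−1}^{(2)}.) -/
import Mathlib

open Finset

namespace CSP3

def nuN (i : ℕ) : ℕ := if i ≤ 1 then 1 else 2

lemma nuN_pos (i : ℕ) : 1 ≤ nuN i := by unfold nuN; split <;> omega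

lemma nuN_pair (j : ℕ) : nuN (2*j) = nuN (2*j+1) := by
  unfold nuN; split_ifs <;> omega

def extF (n : ℕ) (m : Fin (n+1) → ℕ) (i : ℕ) : ℕ := if h : i < n+1 then m ⟨i, h⟩ else 0

lemma extF_eq (n : ℕ) (m : Fin (n+1) → ℕ) (i : ℕ) (h : i < n+1) :
    extF n m i = m ⟨i, h⟩ := dif_pos h

lemma extF_neg (n : ℕ) (m : Fin (n+1) → ℕ) (i : ℕ) (h : ¬ i < n+1) :
    extF n m i = 0 := dif_neg h

lemma extF_coe (n : ℕ) (m : Fin (n+1) → ℕ) (i : Fin (n+1)) : extF n m ↑i = m i := by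
  rw [extF_eq n m i i.isLt]

lemma extF_inj {n : ℕ} (f g : Fin (n+1) → ℕ) (h : ∀ i, extF n f i = extF n g i) : f = g := by
  funext i
  rw [← extF_coe n f i, ← extF_coe n g i]
  exact h i

lemma sum_range_two_mul (f : ℕ → ℕ) (k : ℕ) :
    ∑ i ∈ range (2*k), f i = ∑ j ∈ range k, (f (2*j) + f (2*j+1)) := by
  induction k with
  | zero => simp
  | succ k ih =>
      have h2 : 2*(k+1) = (2*k)+1+1 := by ring
      rw [h2, Finset.sum_range_succ, Finset.sum_range_succ, ih, Finset.sum_range_succ]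
      omega

lemma sum_pair_congr (N : ℕ) (f g : ℕ → ℕ)
    (h1 : ∀ j, 2*j+1 < N → f (2*j) + f (2*j+1) = g (2*j) + g (2*j+1))
    (h2 : ∀ i, i % 2 = 0 → i < N → N ≤ i + 1 → f i = g i) :
    ∑ i ∈ range N, f i = ∑ i ∈ range N, g i := by
  rcases Nat.even_or_odd N with ⟨k, hk⟩ | ⟨k, hk⟩
  · have hN : N = 2*k := by omega
    subst hN
    rw [sum_range_two_mul, sum_range_two_mul]
    exact Finset.sum_congr rfl fun j hj => h1 j (by have := mem_range.1 hj; omega)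
  · have hN : N = 2*k+1 := by omega
    subst hN
    rw [Finset.sum_range_succ, Finset.sum_range_succ, sum_range_two_mul, sum_range_two_mul]
    have e1 : ∑ j ∈ range k, (f (2*j) + f (2*j+1)) = ∑ j ∈ range k, (g (2*j) + g (2*j+1)) :=
      Finset.sum_congr rfl fun j hj => h1 j (by have := mem_range.1 hj; omega)
    have e2 : f (2*k) = g (2*k) := h2 (2*k) (by omega) (by omega) (by omega)
    omega

lemma sum_update_aux (N : ℕ) (f g : ℕ → ℕ) (i0 : ℕ) (hi : i0 < N)
    (h : ∀ i, i < N → i ≠ i0 → f i = g i) :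
    ∑ i ∈ range N, f i + g i0 = ∑ i ∈ range N, g i + f i0 := by
  rw [← Finset.add_sum_erase _ f (mem_range.2 hi), ← Finset.add_sum_erase _ g (mem_range.2 hi)]
  have e : ∑ i ∈ (range N).erase i0, f i = ∑ i ∈ (range N).erase i0, g i :=
    Finset.sum_congr rfl fun i hi' =>
      h i (mem_range.1 (Finset.mem_of_mem_erase hi')) (Finset.ne_of_mem_erase hi')
  omega

lemma pair_le (n : ℕ) (f : ℕ → ℕ) (i1 i2 : ℕ) (hne : i1 ≠ i2) (h1 : i1 < n+1) (h2 : i2 < n+1) :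
    f i1 + f i2 ≤ ∑ i ∈ range (n+1), f i := by
  have hsub : ({i1, i2} : Finset ℕ) ⊆ range (n+1) := by
    intro x hx
    simp only [Finset.mem_insert, Finset.mem_singleton] at hx
    rcases hx with h | h <;> subst h <;> exact mem_range.2 (by omega)
  calc f i1 + f i2 = ∑ x ∈ ({i1, i2} : Finset ℕ), f x := (Finset.sum_pair hne).symm
    _ ≤ _ := Finset.sum_le_sum_of_subset hsub

def Fp (n : ℕ) (m : Fin (n+1) → ℕ) : Prop :=
  ∀ j, j < n → 2*j+1 ≤ n → (extF n m (2*j) = 0 ∧ extF n m (2*j+1) % 2 = 0)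

instance (n : ℕ) : DecidablePred (Fp n) := fun m => by unfold Fp; infer_instance

def Qp (n : ℕ) (m : Fin (n+1) → ℕ) (j : ℕ) : Prop :=
  2*j+1 ≤ n ∧ ¬(extF n m (2*j) = 0 ∧ extF n m (2*j+1) % 2 = 0)

instance (n : ℕ) (m : Fin (n+1) → ℕ) : DecidablePred (Qp n m) := fun j => by
  unfold Qp; infer_instance

lemma not_Fp_iff (n : ℕ) (m : Fin (n+1) → ℕ) : ¬ Fp n m ↔ ∃ j, Qp n m j := by
  unfold Fp Qp
  constructor
  · intro h
    push_neg at h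
    obtain ⟨j, _, hj2, hj3⟩ := h
    exact ⟨j, hj2, by tauto⟩
  · intro ⟨j, hj1, hj2⟩ h
    exact hj2 (h j (by omega) hj1)

def phi (n : ℕ) (m : Fin (n+1) → ℕ) (hm : ∃ j, Qp n m j) : Fin (n+1) → ℕ := fun i =>
  if (i:ℕ) = 2*Nat.find hm then
    (if extF n m (2*Nat.find hm+1) % 2 = 1 then extF n m (i:ℕ) + 1 else extF n m (i:ℕ) - 1)
  else if (i:ℕ) = 2*Nat.find hm+1 then
    (if extF n m (i:ℕ) % 2 = 1 then extF n m (i:ℕ) - 1 else extF n m (i:ℕ) + 1)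
  else m i

lemma phi_ext (n : ℕ) (m : Fin (n+1) → ℕ) (hm : ∃ j, Qp n m j) (i : ℕ) :
    extF n (phi n m hm) i =
      if i = 2*Nat.find hm then
        (if extF n m (2*Nat.find hm+1) % 2 = 1 then extF n m i + 1 else extF n m i - 1)
      else if i = 2*Nat.find hm+1 then
        (if extF n m i % 2 = 1 then extF n m i - 1 else extF n m i + 1)
      else extF n m i := by
  have hj : 2*Nat.find hm + 1 ≤ n := (Nat.find_spec hm).1
  by_cases h : i < n+1
  · rw [extF_eq n _ i h]
    show (if i = 2*Nat.find hm then _ else _) = _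
    rw [extF_eq n m i h]
  · rw [extF_neg n _ i h, if_neg (by omega), if_neg (by omega), extF_neg n m i h]


section PhiLemmas

variable {n : ℕ} (m : Fin (n+1) → ℕ) (hm : ∃ j, Qp n m j)

lemma find_le : 2*Nat.find hm + 1 ≤ n := (Nat.find_spec hm).1

lemma phi_at1 :
    extF n (phi n m hm) (2*Nat.find hm) =
      (if extF n m (2*Nat.find hm+1) % 2 = 1 then extF n m (2*Nat.find hm) + 1
       else extF n m (2*Nat.find hm) - 1) := by
  rw [phi_ext, if_pos rfl]

lemma phi_at2 :
    extF n (phi n m hm) (2*Nat.find hm+1) =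
      (if extF n m (2*Nat.find hm+1) % 2 = 1 then extF n m (2*Nat.find hm+1) - 1
       else extF n m (2*Nat.find hm+1) + 1) := by
  rw [phi_ext, if_neg (by omega), if_pos rfl]

lemma phi_other (i : ℕ) (h1 : i ≠ 2*Nat.find hm) (h2 : i ≠ 2*Nat.find hm+1) :
    extF n (phi n m hm) i = extF n m i := by
  rw [phi_ext, if_neg h1, if_neg h2]

lemma a_pos (hb : extF n m (2*Nat.find hm+1) % 2 = 0) : 1 ≤ extF n m (2*Nat.find hm) := by
  have := (Nat.find_spec hm).2
  by_contra h
  exact this ⟨by omega, hb⟩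

lemma phi_pair_sum :
    extF n (phi n m hm) (2*Nat.find hm) + extF n (phi n m hm) (2*Nat.find hm+1)
      = extF n m (2*Nat.find hm) + extF n m (2*Nat.find hm+1) := by
  rw [phi_at1, phi_at2]
  by_cases cb : extF n m (2*Nat.find hm+1) % 2 = 1
  · rw [if_pos cb, if_pos cb]; omega
  · rw [if_neg cb, if_neg cb]
    have := a_pos m hm (by omega)
    omega

lemma phi_at2_step :
    extF n (phi n m hm) (2*Nat.find hm+1) + 1 = extF n m (2*Nat.find hm+1)
    ∨ extF n m (2*Nat.find hm+1) + 1 = extF n (phi n m hm) (2*Nat.find hm+1) := by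
  rw [phi_at2]
  by_cases cb : extF n m (2*Nat.find hm+1) % 2 = 1
  · left; rw [if_pos cb]; omega
  · right; rw [if_neg cb]

lemma phi_Qp : Qp n (phi n m hm) (Nat.find hm) := by
  refine ⟨find_le m hm, ?_⟩
  rw [phi_at1, phi_at2]
  by_cases cb : extF n m (2*Nat.find hm+1) % 2 = 1
  · rw [if_pos cb, if_pos cb]; intro ⟨h1, _⟩; omega
  · rw [if_neg cb, if_neg cb]; intro ⟨_, h2⟩; omega

lemma phi_find (hm2 : ∃ j, Qp n (phi n m hm) j) : Nat.find hm2 = Nat.find hm := by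
  rw [Nat.find_eq_iff]
  refine ⟨phi_Qp m hm, fun k hk => ?_⟩
  intro ⟨hk1, hk2⟩
  have e1 : extF n (phi n m hm) (2*k) = extF n m (2*k) :=
    phi_other m hm _ (by omega) (by omega)
  have e2 : extF n (phi n m hm) (2*k+1) = extF n m (2*k+1) :=
    phi_other m hm _ (by omega) (by omega)
  rw [e1, e2] at hk2
  exact Nat.find_min hm hk ⟨hk1, hk2⟩

lemma phi_invol (hm2 : ∃ j, Qp n (phi n m hm) j) :
    phi n (phi n m hm) hm2 = m := by
  apply extF_inj
  intro i
  have hfind := phi_find m hm hm2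
  by_cases h1 : i = 2*Nat.find hm
  · subst h1
    rw [← hfind, phi_at1 (phi n m hm) hm2, hfind, phi_at2, phi_at1]
    by_cases cb : extF n m (2*Nat.find hm+1) % 2 = 1
    · rw [if_pos cb, if_pos cb, if_neg (by omega)]; omega
    · have ha := a_pos m hm (by omega)
      rw [if_neg cb, if_neg cb, if_pos (by omega)]; omega
  · by_cases h2 : i = 2*Nat.find hm+1
    · subst h2
      rw [← hfind, phi_at2 (phi n m hm) hm2, hfind, phi_at2]
      by_cases cb : extF n m (2*Nat.find hm+1) % 2 = 1
      · rw [if_pos cb, if_neg (by omega)]; omega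
      · rw [if_neg cb, if_pos (by omega)]; omega
    · rw [phi_other (phi n m hm) hm2 i (by omega) (by omega), phi_other m hm i h1 h2]

lemma phi_ne : phi n m hm ≠ m := by
  intro h
  have := phi_at2_step m hm
  rw [h] at this
  omega

end PhiLemmas


section PhiSum

variable {n ℓ : ℕ} (m : Fin (n+1) → ℕ) (hm : ∃ j, Qp n m j)

lemma phi_weight (hw : ∑ i ∈ range (n+1), nuN i * extF n m i = ℓ) :
    ∑ i ∈ range (n+1), nuN i * extF n (phi n m hm) i = ℓ := by
  rw [← hw]
  apply sum_pair_congr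
  · intro j hj
    by_cases hj0 : j = Nat.find hm
    · subst hj0
      rw [nuN_pair, ← Nat.mul_add, ← Nat.mul_add, phi_pair_sum]
    · rw [phi_other m hm (2*j) (by omega) (by omega),
        phi_other m hm (2*j+1) (by omega) (by omega)]
  · intro i hi _ _
    have hfl := find_le m hm
    rw [phi_other m hm i (by omega) (by omega)]

lemma phi_bound (hb : ∀ i, extF n m i ≤ ℓ)
    (hw : ∑ i ∈ range (n+1), nuN i * extF n m i = ℓ) :
    ∀ i, extF n (phi n m hm) i ≤ ℓ := by
  intro i
  have hfl := find_le m hm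
  have hab : extF n m (2*Nat.find hm) + extF n m (2*Nat.find hm+1) ≤ ℓ := by
    have h1 := pair_le n (fun i => nuN i * extF n m i) (2*Nat.find hm) (2*Nat.find hm+1)
      (by omega) (by omega) (by omega)
    have h2 := nuN_pos (2*Nat.find hm)
    have h3 := nuN_pos (2*Nat.find hm+1)
    rw [hw] at h1
    nlinarith [Nat.le_mul_of_pos_left (extF n m (2*Nat.find hm)) (h2),
      Nat.le_mul_of_pos_left (extF n m (2*Nat.find hm+1)) (h3)]
  by_cases h1 : i = 2*Nat.find hm
  · subst h1
    rw [phi_at1]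
    by_cases cb : extF n m (2*Nat.find hm+1) % 2 = 1
    · rw [if_pos cb]; omega
    · rw [if_neg cb]; have := hb (2*Nat.find hm); omega
  · by_cases h2 : i = 2*Nat.find hm+1
    · subst h2
      rw [phi_at2]
      by_cases cb : extF n m (2*Nat.find hm+1) % 2 = 1
      · rw [if_pos cb]; have := hb (2*Nat.find hm+1); omega
      · rw [if_neg cb]; have := a_pos m hm (by omega); omega
    · rw [phi_other m hm i h1 h2]; exact hb i

/-- the sieving exponent, as a range sum -/
def Er (n : ℕ) (m : Fin (n+1) → ℕ) : ℕ :=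
  ∑ i ∈ range (n+1), (if i % 2 = 1 then extF n m i else 0)

lemma phi_Er_step :
    Er n (phi n m hm) + 1 = Er n m ∨ Er n m + 1 = Er n (phi n m hm) := by
  have hfl := find_le m hm
  have key : Er n (phi n m hm) + extF n m (2*Nat.find hm+1)
      = Er n m + extF n (phi n m hm) (2*Nat.find hm+1) := by
    have := sum_update_aux (n+1)
      (fun i => if i % 2 = 1 then extF n (phi n m hm) i else 0)
      (fun i => if i % 2 = 1 then extF n m i else 0)
      (2*Nat.find hm+1) (by omega) ?_
    · unfold Er
      simpa [Nat.mul_add_mod] using this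
    · intro i hi hne
      by_cases ho : i % 2 = 1
      · simp only [if_pos ho]
        exact phi_other m hm i (by omega) hne
      · simp only [if_neg ho]
  have := phi_at2_step m hm
  omega

end PhiSum


section PsiTheta

variable {n ℓ : ℕ}

def theta (n : ℕ) (m : Fin (n+1) → ℕ) : Fin (n+1) → ℕ := fun i =>
  if 2*((i:ℕ)/2)+1 ≤ n then (if (i:ℕ) % 2 = 1 then 2 * m i else 0) else m i

def psi (n : ℕ) (m : Fin (n+1) → ℕ) : Fin (n+1) → ℕ := fun i =>
  if 2*((i:ℕ)/2)+1 ≤ n then extF n m (2*((i:ℕ)/2)+1) / 2 else m i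

lemma theta_ext (m : Fin (n+1) → ℕ) (i : ℕ) :
    extF n (theta n m) i =
      if 2*(i/2)+1 ≤ n then (if i % 2 = 1 then 2 * extF n m i else 0) else extF n m i := by
  by_cases h : i < n+1
  · rw [extF_eq n _ i h, extF_eq n m i h]
    rfl
  · rw [extF_neg n _ i h, extF_neg n m i h, if_neg (by omega)]

lemma psi_ext (m : Fin (n+1) → ℕ) (i : ℕ) :
    extF n (psi n m) i =
      if 2*(i/2)+1 ≤ n then extF n m (2*(i/2)+1) / 2 else extF n m i := by
  by_cases h : i < n+1
  · rw [extF_eq n _ i h, extF_eq n m i h]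
    rfl
  · rw [extF_neg n _ i h, extF_neg n m i h, if_neg (by omega)]

end PsiTheta


section PsiThetaMem

variable {n ℓ : ℕ} (m : Fin (n+1) → ℕ)

/-- diagonal condition at `ℕ` level -/
def Dg (n : ℕ) (m : Fin (n+1) → ℕ) : Prop :=
  ∀ j, 2*j+1 ≤ n → extF n m (2*j) = extF n m (2*j+1)

lemma theta_bound (hn : 3 ≤ n) (hd : Dg n m)
    (hw : ∑ i ∈ range (n+1), nuN i * extF n m i = ℓ) :
    ∀ i, extF n (theta n m) i ≤ ℓ := by
  intro i
  rw [theta_ext]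
  by_cases hp : 2*(i/2)+1 ≤ n
  · rw [if_pos hp]
    by_cases ho : i % 2 = 1
    · rw [if_pos ho]
      have hii : i = 2*(i/2)+1 := by omega
      by_cases hi1 : i = 1
      · subst hi1
        have h01 := pair_le n (fun i => nuN i * extF n m i) 0 1 (by omega) (by omega) (by omega)
        rw [hw] at h01
        have hd0 : extF n m 0 = extF n m 1 := by simpa using hd 0 (by omega)
        have hn0 : nuN 0 * extF n m 0 = extF n m 0 := by simp [nuN]
        have hn1 : nuN 1 * extF n m 1 = extF n m 1 := by simp [nuN]
        simp only [hn0, hn1] at h01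
        omega
      · have h1 : nuN i * extF n m i ≤ ∑ x ∈ range (n+1), nuN x * extF n m x :=
          Finset.single_le_sum (f := fun i => nuN i * extF n m i)
            (fun _ _ => Nat.zero_le _) (mem_range.2 (by omega))
        have h2 : nuN i = 2 := by unfold nuN; rw [if_neg (by omega)]
        rw [hw, h2] at h1
        omega
    · rw [if_neg ho]; omega
  · rw [if_neg hp]
    have h1 : nuN i * extF n m i ≤ ∑ x ∈ range (n+1), nuN x * extF n m x := by
      by_cases h : i < n+1
      · exact Finset.single_le_sum (f := fun i => nuN i * extF n m i)
          (fun _ _ => Nat.zero_le _) (mem_range.2 h)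
      · rw [extF_neg n m i h]; omega
    have := nuN_pos i
    rw [hw] at h1
    nlinarith

lemma theta_weight (hd : Dg n m)
    (hw : ∑ i ∈ range (n+1), nuN i * extF n m i = ℓ) :
    ∑ i ∈ range (n+1), nuN i * extF n (theta n m) i = ℓ := by
  rw [← hw]
  apply sum_pair_congr
  · intro j hj
    have hjn : 2*j+1 ≤ n := by omega
    have e1 : extF n (theta n m) (2*j) = 0 := by
      rw [theta_ext]
      have : (2*j)/2 = j := by omega
      rw [this, if_pos hjn, if_neg (by omega)]
    have e2 : extF n (theta n m) (2*j+1) = 2 * extF n m (2*j+1) := by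
      rw [theta_ext]
      have : (2*j+1)/2 = j := by omega
      rw [this, if_pos hjn, if_pos (by omega)]
    rw [e1, e2, nuN_pair, hd j hjn]
    ring
  · intro i he hi hi2
    rw [theta_ext, if_neg (by omega)]

lemma theta_Fp (hd : Dg n m) : Fp n (theta n m) := by
  intro j _ hjn
  constructor
  · rw [theta_ext]
    have : (2*j)/2 = j := by omega
    rw [this, if_pos hjn, if_neg (by omega)]
  · rw [theta_ext]
    have : (2*j+1)/2 = j := by omega
    rw [this, if_pos hjn, if_pos (by omega)]
    omega

lemma psi_bound (hb : ∀ i, extF n m i ≤ ℓ) :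
    ∀ i, extF n (psi n m) i ≤ ℓ := by
  intro i
  rw [psi_ext]
  by_cases hp : 2*(i/2)+1 ≤ n
  · rw [if_pos hp]
    have := hb (2*(i/2)+1)
    omega
  · rw [if_neg hp]; exact hb i

lemma psi_weight (hf : Fp n m)
    (hw : ∑ i ∈ range (n+1), nuN i * extF n m i = ℓ) :
    ∑ i ∈ range (n+1), nuN i * extF n (psi n m) i = ℓ := by
  rw [← hw]
  apply sum_pair_congr
  · intro j hj
    have hjn : 2*j+1 ≤ n := by omega
    obtain ⟨hz, he⟩ := hf j (by omega) hjn
    have e1 : extF n (psi n m) (2*j) = extF n m (2*j+1) / 2 := by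
      rw [psi_ext]
      have : (2*j)/2 = j := by omega
      rw [this, if_pos hjn]
    have e2 : extF n (psi n m) (2*j+1) = extF n m (2*j+1) / 2 := by
      rw [psi_ext]
      have : (2*j+1)/2 = j := by omega
      rw [this, if_pos hjn]
    rw [e1, e2, nuN_pair, hz]
    have : 2 * (extF n m (2*j+1) / 2) = extF n m (2*j+1) := by omega
    nlinarith [this]
  · intro i he hi hi2
    rw [psi_ext, if_neg (by omega)]

lemma psi_Dg (hf : Fp n m) : Dg n (psi n m) := by
  intro j hjn
  have e1 : (2*j)/2 = j := by omega
  have e2 : (2*j+1)/2 = j := by omega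
  rw [psi_ext, psi_ext, e1, e2, if_pos hjn, if_pos hjn]

lemma theta_psi (hf : Fp n m) : theta n (psi n m) = m := by
  apply extF_inj
  intro i
  rw [theta_ext]
  by_cases hp : 2*(i/2)+1 ≤ n
  · rw [if_pos hp]
    obtain ⟨hz, he⟩ := hf (i/2) (by omega) hp
    by_cases ho : i % 2 = 1
    · rw [if_pos ho, psi_ext, if_pos hp]
      have : 2*(i/2)+1 = i := by omega
      rw [this] at he ⊢
      omega
    · rw [if_neg ho]
      have : 2*(i/2) = i := by omega
      rw [this] at hz
      omega
  · rw [if_neg hp, psi_ext, if_neg hp]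

lemma psi_theta (hd : Dg n m) : psi n (theta n m) = m := by
  apply extF_inj
  intro i
  rw [psi_ext]
  by_cases hp : 2*(i/2)+1 ≤ n
  · rw [if_pos hp]
    have t1 : extF n (theta n m) (2*(i/2)+1) = 2 * extF n m (2*(i/2)+1) := by
      rw [theta_ext]
      have e2 : (2*(i/2)+1)/2 = i/2 := by omega
      rw [e2, if_pos hp, if_pos (by omega)]
    rw [t1]
    by_cases ho : i % 2 = 1
    · have hii : 2*(i/2)+1 = i := by omega
      rw [hii]
      omega
    · have hd' := hd (i/2) hp
      have hii : 2*(i/2) = i := by omega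
      rw [hii] at hd' ⊢
      omega
  · rw [if_neg hp, theta_ext, if_neg hp]

end PsiThetaMem

end CSP3

open Finset

/-- **Cyclic sieving phenomenon for type `A_{2n-1}^(2)`.**
For `n ≥ 3` and `ℓ ≥ 0`, among the `(n+1)`-tuples `m` of nonnegative integers with
`m_0 + m_1 + 2(m_2 + ⋯ + m_n) = ℓ`, the number of those with `m_{2j} = m_{2j+1}` whenever
`2j+1 ≤ n` equals `∑_m (-1)^(m_1 + m_3 + m_5 + ⋯)`. -/
theorem stmt_3 (n ℓ : ℕ) (hn : 3 ≤ n) :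
    let ν : Fin (n + 1) → ℕ := fun i => if (i : ℕ) ≤ 1 then 1 else 2
    let X : Finset (Fin (n + 1) → ℕ) :=
      (Fintype.piFinset fun _ => Finset.range (ℓ + 1)).filter
        (fun m => ∑ i, ν i * m i = ℓ)
    ((X.filter (fun m => ∀ j : Fin (n + 1), ∀ h : 2 * (j : ℕ) + 1 ≤ n,
        m ⟨2 * (j : ℕ), by omega⟩ = m ⟨2 * (j : ℕ) + 1, by omega⟩)).card : ℤ)
      = ∑ m ∈ X,
          (-1 : ℤ) ^ (∑ i ∈ Finset.univ.filter (fun i : Fin (n + 1) => (i : ℕ) % 2 = 1), m i) := by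
  intro ν X
  have hXmem : ∀ m : Fin (n+1) → ℕ, m ∈ X ↔
      ((∀ i, CSP3.extF n m i ≤ ℓ) ∧ ∑ i ∈ range (n+1), CSP3.nuN i * CSP3.extF n m i = ℓ) := by
    intro m
    have hXdef : X = (Fintype.piFinset fun _ => Finset.range (ℓ + 1)).filter
        (fun m => ∑ i, ν i * m i = ℓ) := rfl
    rw [hXdef, Finset.mem_filter, Fintype.mem_piFinset]
    have hsum : (∑ i, ν i * m i) = ∑ i ∈ range (n+1), CSP3.nuN i * CSP3.extF n m i := by
      rw [← Fin.sum_univ_eq_sum_range (fun i => CSP3.nuN i * CSP3.extF n m i) (n+1)]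
      exact Finset.sum_congr rfl fun i _ => by rw [CSP3.extF_coe]; rfl
    rw [hsum]
    constructor
    · rintro ⟨h1, h2⟩
      refine ⟨fun i => ?_, h2⟩
      unfold CSP3.extF
      split
      · next h =>
          have := h1 ⟨i, h⟩
          rw [Finset.mem_range] at this
          omega
      · omega
    · rintro ⟨h1, h2⟩
      refine ⟨fun i => ?_, h2⟩
      rw [Finset.mem_range]
      have := h1 ↑i
      rw [CSP3.extF_coe] at this
      omega
  have hexpo : ∀ m : Fin (n+1) → ℕ,
      (∑ i ∈ Finset.univ.filter (fun i : Fin (n + 1) => (i : ℕ) % 2 = 1), m i) = CSP3.Er n m := by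
    intro m
    unfold CSP3.Er
    rw [Finset.sum_filter,
      ← Fin.sum_univ_eq_sum_range (fun i => if i % 2 = 1 then CSP3.extF n m i else 0) (n+1)]
    exact Finset.sum_congr rfl fun i _ => by rw [CSP3.extF_coe]
  have hdiag : ∀ m : Fin (n+1) → ℕ,
      (∀ j : Fin (n + 1), ∀ h : 2 * (j : ℕ) + 1 ≤ n,
        m ⟨2 * (j : ℕ), by omega⟩ = m ⟨2 * (j : ℕ) + 1, by omega⟩) ↔ CSP3.Dg n m := by
    intro m
    constructor
    · intro h j hj
      rw [CSP3.extF_eq n m (2*j) (by omega), CSP3.extF_eq n m (2*j+1) (by omega)]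
      exact h ⟨j, by omega⟩ hj
    · intro h j hj
      have := h (j : ℕ) hj
      rw [CSP3.extF_eq n m (2*(j:ℕ)) (by omega), CSP3.extF_eq n m (2*(j:ℕ)+1) (by omega)] at this
      exact this
  rw [← Finset.sum_filter_add_sum_filter_not X (CSP3.Fp n)
      (fun m => (-1 : ℤ) ^ (∑ i ∈ Finset.univ.filter
        (fun i : Fin (n + 1) => (i : ℕ) % 2 = 1), m i))]
  have hex : ∀ m ∈ X.filter (fun m => ¬ CSP3.Fp n m), ∃ j, CSP3.Qp n m j :=
    fun m hms => (CSP3.not_Fp_iff n m).1 (Finset.mem_filter.1 hms).2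
  have hzero : ∑ m ∈ X.filter (fun m => ¬ CSP3.Fp n m),
      (-1 : ℤ) ^ (∑ i ∈ Finset.univ.filter
        (fun i : Fin (n + 1) => (i : ℕ) % 2 = 1), m i) = 0 := by
    refine Finset.sum_involution (fun m hms => CSP3.phi n m (hex m hms)) ?_ ?_ ?_ ?_
    · intro m hms
      rw [hexpo m, hexpo _]
      rcases CSP3.phi_Er_step m (hex m hms) with h | h
      · rw [← h, pow_succ]; ring
      · rw [← h, pow_succ]; ring
    · intro m hms _
      exact CSP3.phi_ne m (hex m hms)
    · intro m hms
      obtain ⟨hmX, hmF⟩ := Finset.mem_filter.1 hms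
      obtain ⟨hb, hw⟩ := (hXmem m).1 hmX
      refine Finset.mem_filter.2 ⟨(hXmem _).2
        ⟨CSP3.phi_bound m (hex m hms) hb hw, CSP3.phi_weight m (hex m hms) hw⟩, ?_⟩
      rw [CSP3.not_Fp_iff]
      exact ⟨_, CSP3.phi_Qp m (hex m hms)⟩
    · intro m hms
      exact CSP3.phi_invol m (hex m hms) _
  rw [hzero, add_zero]
  have hone : ∑ m ∈ X.filter (CSP3.Fp n),
      (-1 : ℤ) ^ (∑ i ∈ Finset.univ.filter
        (fun i : Fin (n + 1) => (i : ℕ) % 2 = 1), m i)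
      = ((X.filter (CSP3.Fp n)).card : ℤ) := by
    have hval : ∀ m ∈ X.filter (CSP3.Fp n),
        (-1 : ℤ) ^ (∑ i ∈ Finset.univ.filter
          (fun i : Fin (n + 1) => (i : ℕ) % 2 = 1), m i) = 1 := by
      intro m hms
      obtain ⟨hmX, hmF⟩ := Finset.mem_filter.1 hms
      rw [hexpo m]
      clear hzero hex hms hmX
      apply Even.neg_one_pow
      rw [Nat.even_iff]
      unfold CSP3.Er
      rw [Finset.sum_nat_mod]
      have hz : ∀ i ∈ range (n+1), (if i % 2 = 1 then CSP3.extF n m i else 0) % 2 = 0 := by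
        intro i hi
        have hmem := Finset.mem_range.1 hi
        by_cases ho : i % 2 = 1
        · rw [if_pos ho]
          have h2 := (hmF (i/2) (show i/2 < n by omega) (show 2*(i/2)+1 ≤ n by omega)).2
          have hii : 2*(i/2)+1 = i := by omega
          rw [hii] at h2
          exact h2
        · rw [if_neg ho]
      rw [Finset.sum_congr rfl hz, Finset.sum_const_zero]
      omega
    rw [Finset.sum_congr rfl hval, Finset.sum_const, nsmul_eq_mul, mul_one]
  rw [hone]
  norm_cast
  refine Finset.card_bij' (fun m _ => CSP3.theta n m) (fun m _ => CSP3.psi n m) ?_ ?_ ?_ ?_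
  · intro m hms
    rw [Finset.mem_filter] at hms ⊢
    obtain ⟨hmX, hmD⟩ := hms
    obtain ⟨hb, hw⟩ := (hXmem m).1 hmX
    have hd : CSP3.Dg n m := (hdiag m).1 hmD
    exact ⟨(hXmem _).2 ⟨CSP3.theta_bound m hn hd hw, CSP3.theta_weight m hd hw⟩,
      CSP3.theta_Fp m hd⟩
  · intro m hms
    rw [Finset.mem_filter] at hms ⊢
    obtain ⟨hmX, hmF⟩ := hms
    obtain ⟨hb, hw⟩ := (hXmem m).1 hmX
    exact ⟨(hXmem _).2 ⟨CSP3.psi_bound m hb, CSP3.psi_weight m hmF hw⟩,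
      (hdiag _).2 (CSP3.psi_Dg m hmF)⟩
  · intro m hms
    have hd := (hdiag m).1 (Finset.mem_filter.1 hms).2
    exact CSP3.psi_theta m hd
  · intro m hms
    exact CSP3.theta_psi m (Finset.mem_filter.1 hms).2
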